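/- Let Y be a complex 3×3 matrix with SVD Y = U_L · diag(y₁, y₂, y₃) · U_R†, 0 ≤ y₁ ≤ y₂ ≤ y₃, y₃² > 2y₂². Let β index a longest column of Y, define the unit vector u with components uᵢ = Y_{iβ}/√((Y†Y)_{ββ}) (assuming (Y†Y)_{ββ} > 0), and set V_{i3} = (U_L† u)ᵢ. Then for i = 1, 2: |V_{i3}|² ≤ X (yᵢ/y₃)², and 1 − |V_{33}|² ≤ X (y₂/y₃)², where X = (2y₃² − y₂²)/(y₃² − 2y₂²). -/

import Mathlib

/-!
Since `U_Lᴴ Y = D U_Rᴴ`, the overlaps are `|V_{i3}|² = yᵢ² aᵢ / s` with `aᵢ = |(U_R)_{βi}|²` a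
probability vector and `s = ∑ yᵢ² aᵢ` the squared length of column `β`. Being the longest column,
`3 s ≥ ∑ yᵢ² = ‖Y‖_F²`. Together with `y₂² (1 - a₀ - a₁) ≤ s ≤ y₂² - (a₀ + a₁)(y₂² - y₁²)` this
leaves room for at most `a₀ + a₁ ≤ X s / y₂²`, which gives all three bounds.
-/

open Matrix

namespace Matrix

variable {𝕜 n : Type*} [RCLike 𝕜] [Fintype n] [DecidableEq n]

theorem sum_norm_sq_mulVec_of_mem_unitaryGroup {U : Matrix n n 𝕜}
    (hU : U ∈ unitaryGroup n 𝕜) (v : n → 𝕜) :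
    ∑ i, ‖(U *ᵥ v) i‖ ^ 2 = ∑ i, ‖v i‖ ^ 2 := by
  have h := congrArg (· ^ 2) <| ContinuousLinearMap.norm_map_of_mem_unitary
    (Unitary.map_mem (toEuclideanCLM (n := n) (𝕜 := 𝕜)) hU) (WithLp.toLp 2 v)
  simpa only [toEuclideanCLM_toLp, EuclideanSpace.norm_sq_eq, WithLp.ofLp_toLp] using h

theorem sum_norm_sq_col_of_mem_unitaryGroup {U : Matrix n n 𝕜}
    (hU : U ∈ unitaryGroup n 𝕜) (j : n) : ∑ i, ‖U i j‖ ^ 2 = 1 := by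
  simpa [mulVec_single_one, Pi.single_apply, apply_ite] using
    sum_norm_sq_mulVec_of_mem_unitaryGroup hU (Pi.single j 1)

theorem sum_norm_sq_row_of_mem_unitaryGroup {U : Matrix n n 𝕜}
    (hU : U ∈ unitaryGroup n 𝕜) (i : n) : ∑ j, ‖U i j‖ ^ 2 = 1 := by
  simpa using sum_norm_sq_col_of_mem_unitaryGroup (Unitary.star_mem hU) i

section SVD

variable {Y U V : Matrix n n 𝕜} {σ : n → ℝ}

theorem conjTranspose_mul_apply_of_svd (hU : U ∈ unitaryGroup n 𝕜)
    (hY : Y = U * diagonal (fun i => (σ i : 𝕜)) * Vᴴ) (i j : n) :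
    (Uᴴ * Y) i j = σ i * star (V j i) := by
  have hUU : Uᴴ * U = 1 := Unitary.star_mul_self_of_mem hU
  rw [hY, ← Matrix.mul_assoc, ← Matrix.mul_assoc, hUU, Matrix.one_mul, diagonal_mul,
    conjTranspose_apply]

theorem sum_norm_sq_col_of_svd (hU : U ∈ unitaryGroup n 𝕜)
    (hY : Y = U * diagonal (fun i => (σ i : 𝕜)) * Vᴴ) (j : n) :
    ∑ k, ‖Y k j‖ ^ 2 = ∑ i, σ i ^ 2 * ‖V j i‖ ^ 2 := by
  have h := sum_norm_sq_mulVec_of_mem_unitaryGroup (Unitary.star_mem hU) (Y.col j)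
  simp only [← mulVec_single_one, mulVec_mulVec] at h
  simp only [mulVec_single_one, col_apply, star_eq_conjTranspose,
    conjTranspose_mul_apply_of_svd hU hY, norm_mul, norm_star, RCLike.norm_ofReal, mul_pow,
    sq_abs] at h
  exact h.symm

theorem sum_sum_norm_sq_of_svd (hU : U ∈ unitaryGroup n 𝕜) (hV : V ∈ unitaryGroup n 𝕜)
    (hY : Y = U * diagonal (fun i => (σ i : 𝕜)) * Vᴴ) :
    ∑ j, ∑ k, ‖Y k j‖ ^ 2 = ∑ i, σ i ^ 2 := by
  simp_rw [sum_norm_sq_col_of_svd hU hY]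
  rw [Finset.sum_comm]
  simp_rw [← Finset.mul_sum, sum_norm_sq_col_of_mem_unitaryGroup hV, mul_one]

theorem norm_sq_conjTranspose_mulVec_col_div_of_svd (hU : U ∈ unitaryGroup n 𝕜)
    (hY : Y = U * diagonal (fun i => (σ i : 𝕜)) * Vᴴ) (j : n) (c : 𝕜) (i : n) :
    ‖(Uᴴ *ᵥ fun k => Y k j / c) i‖ ^ 2 = σ i ^ 2 * ‖V j i‖ ^ 2 / ‖c‖ ^ 2 := by
  have h : (Uᴴ *ᵥ fun k => Y k j / c) i = (Uᴴ * Y) i j / c := by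
    simp only [mulVec, dotProduct, mul_apply, mul_div_assoc, Finset.sum_div]
  rw [h, conjTranspose_mul_apply_of_svd hU hY, norm_div, norm_mul, norm_star,
    RCLike.norm_ofReal, div_pow, mul_pow, sq_abs]

theorem sum_sq_le_card_mul_sum_norm_sq_col_of_svd (hU : U ∈ unitaryGroup n 𝕜)
    (hV : V ∈ unitaryGroup n 𝕜) (hY : Y = U * diagonal (fun i => (σ i : 𝕜)) * Vᴴ) {β : n}
    (hβ : ∀ j, ∑ k, ‖Y k j‖ ^ 2 ≤ ∑ k, ‖Y k β‖ ^ 2) :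
    ∑ i, σ i ^ 2 ≤ Fintype.card n * ∑ k, ‖Y k β‖ ^ 2 := by
  rw [← sum_sum_norm_sq_of_svd hU hV hY, ← nsmul_eq_mul]
  exact Finset.sum_le_card_nsmul _ _ _ fun j _ => hβ j

end SVD

end Matrix

theorem weight_sum_div_le {p₀ p₁ p₂ a₀ a₁ a₂ s : ℝ} (hp₀ : 0 ≤ p₀) (hp₀₁ : p₀ ≤ p₁)
    (hgap : 2 * p₁ < p₂) (ha₀ : 0 ≤ a₀) (ha₁ : 0 ≤ a₁) (ha : a₀ + a₁ + a₂ = 1)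
    (hs : s = p₀ * a₀ + p₁ * a₁ + p₂ * a₂) (hs₀ : 0 < s) (hs₃ : p₀ + p₁ + p₂ ≤ 3 * s) :
    (a₀ + a₁) / s ≤ (2 * p₂ - p₁) / (p₂ - 2 * p₁) / p₂ := by
  have hp₁ : 0 ≤ p₁ := hp₀.trans hp₀₁
  have hupper : s ≤ p₂ - (a₀ + a₁) * (p₂ - p₁) := by
    nlinarith [mul_le_mul_of_nonneg_right hp₀₁ ha₀]
  have hweight : 3 * (a₀ + a₁) * (p₂ - p₁) ≤ 2 * p₂ - p₁ := by linarith
  have hlower : p₂ * (1 - (a₀ + a₁)) ≤ s := by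
    nlinarith [mul_nonneg hp₀ ha₀, mul_nonneg hp₁ ha₁]
  have hkey : (a₀ + a₁) * (p₂ * (p₂ - 2 * p₁)) ≤ (2 * p₂ - p₁) * s := by
    nlinarith [mul_le_mul_of_nonneg_left hweight (by linarith : 0 ≤ p₂),
      mul_le_mul_of_nonneg_left hlower (by linarith : 0 ≤ 2 * p₂ - p₁)]
  rw [div_div, div_le_div_iff₀ hs₀ (by nlinarith)]
  linarith

theorem overlap_bounds_of_weights {p₀ p₁ p₂ a₀ a₁ a₂ s : ℝ} (hp₀ : 0 ≤ p₀) (hp₀₁ : p₀ ≤ p₁)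
    (hgap : 2 * p₁ < p₂) (ha₀ : 0 ≤ a₀) (ha₁ : 0 ≤ a₁) (ha : a₀ + a₁ + a₂ = 1)
    (hs : s = p₀ * a₀ + p₁ * a₁ + p₂ * a₂) (hs₀ : 0 < s) (hs₃ : p₀ + p₁ + p₂ ≤ 3 * s) :
    p₀ * a₀ / s ≤ (2 * p₂ - p₁) / (p₂ - 2 * p₁) * (p₀ / p₂) ∧
    p₁ * a₁ / s ≤ (2 * p₂ - p₁) / (p₂ - 2 * p₁) * (p₁ / p₂) ∧
    1 - p₂ * a₂ / s ≤ (2 * p₂ - p₁) / (p₂ - 2 * p₁) * (p₁ / p₂) := by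
  have hp₁ : 0 ≤ p₁ := hp₀.trans hp₀₁
  have hbound : ∀ w c, 0 ≤ c → w ≤ c * (a₀ + a₁) →
      w / s ≤ (2 * p₂ - p₁) / (p₂ - 2 * p₁) * (c / p₂) := by
    intro w c hc hw
    calc w / s ≤ c * ((a₀ + a₁) / s) := by rw [← mul_div_assoc]; gcongr
      _ ≤ c * ((2 * p₂ - p₁) / (p₂ - 2 * p₁) / p₂) := by
        exact mul_le_mul_of_nonneg_left (weight_sum_div_le hp₀ hp₀₁ hgap ha₀ ha₁ ha hs hs₀ hs₃) hc
      _ = (2 * p₂ - p₁) / (p₂ - 2 * p₁) * (c / p₂) := by ring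
  refine ⟨hbound _ _ hp₀ (by nlinarith), hbound _ _ hp₁ (by nlinarith), ?_⟩
  rw [show 1 - p₂ * a₂ / s = (p₀ * a₀ + p₁ * a₁) / s by field_simp; linarith]
  exact hbound _ _ hp₁ (by nlinarith [mul_le_mul_of_nonneg_right hp₀₁ ha₀])

theorem normalized_longest_column_overlap_bounds_general
    (Y U_L U_R : Matrix (Fin 3) (Fin 3) ℂ) (y : Fin 3 → ℝ) (β : Fin 3)
    (hUL : U_L ∈ Matrix.unitaryGroup (Fin 3) ℂ)
    (hUR : U_R ∈ Matrix.unitaryGroup (Fin 3) ℂ)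
    (hy0 : 0 ≤ y 0) (h01 : y 0 ≤ y 1)
    (hgap : 2 * (y 1)^2 < (y 2)^2)
    (hSVD : Y = U_L * Matrix.diagonal (fun i => (y i : ℂ)) * U_Rᴴ)
    (hβ : ∀ j, ∑ k, ‖Y k j‖^2 ≤ ∑ k, ‖Y k β‖^2)
    (hN : 0 < ∑ k, ‖Y k β‖^2)
    (u : Fin 3 → ℂ)
    (hu : ∀ i, u i = Y i β / ((Real.sqrt (∑ k, ‖Y k β‖^2) : ℝ) : ℂ)) :
    ‖(U_Lᴴ *ᵥ u) 0‖^2 ≤ (2 * (y 2)^2 - (y 1)^2) / ((y 2)^2 - 2 * (y 1)^2) * (y 0 / y 2)^2 ∧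
    ‖(U_Lᴴ *ᵥ u) 1‖^2 ≤ (2 * (y 2)^2 - (y 1)^2) / ((y 2)^2 - 2 * (y 1)^2) * (y 1 / y 2)^2 ∧
    1 - ‖(U_Lᴴ *ᵥ u) 2‖^2 ≤ (2 * (y 2)^2 - (y 1)^2) / ((y 2)^2 - 2 * (y 1)^2) * (y 1 / y 2)^2 := by
  have hV : ∀ i, ‖(U_Lᴴ *ᵥ u) i‖ ^ 2 = y i ^ 2 * ‖U_R β i‖ ^ 2 / ∑ k, ‖Y k β‖ ^ 2 := by
    intro i
    rw [funext hu, norm_sq_conjTranspose_mulVec_col_div_of_svd hUL hSVD, Complex.norm_real,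
      Real.norm_of_nonneg (Real.sqrt_nonneg _), Real.sq_sqrt hN.le]
  have hs := (sum_norm_sq_col_of_svd hUL hSVD β).trans (Fin.sum_univ_three _)
  have ha := (Fin.sum_univ_three _).symm.trans (sum_norm_sq_row_of_mem_unitaryGroup hUR β)
  have h3s := sum_sq_le_card_mul_sum_norm_sq_col_of_svd hUL hUR hSVD hβ
  rw [Fin.sum_univ_three (fun i => y i ^ 2), Fintype.card_fin, Nat.cast_ofNat] at h3s
  simp only [hV, div_pow]
  exact overlap_bounds_of_weights (sq_nonneg _) (pow_le_pow_left₀ hy0 h01 2) hgap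
    (sq_nonneg _) (sq_nonneg _) ha hs hN h3s

/-- Third-column bounds of Theorem 5: the normalized longest column u of Y satisfies
`|(U_L† u)ᵢ|² ≤ X (yᵢ/y₃)²` for i = 1,2 and `1 − |(U_L† u)₃|² ≤ X (y₂/y₃)²`. -/
theorem normalized_longest_column_overlap_bounds
    (Y U_L U_R : Matrix (Fin 3) (Fin 3) ℂ) (y : Fin 3 → ℝ) (β : Fin 3)
    (hUL : U_L ∈ Matrix.unitaryGroup (Fin 3) ℂ)
    (hUR : U_R ∈ Matrix.unitaryGroup (Fin 3) ℂ)
    (hy0 : 0 ≤ y 0) (h01 : y 0 ≤ y 1) (h12 : y 1 ≤ y 2)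
    (hgap : 2 * (y 1)^2 < (y 2)^2)
    (hSVD : Y = U_L * Matrix.diagonal (fun i => (y i : ℂ)) * U_Rᴴ)
    (hβ : ∀ j, ∑ k, ‖Y k j‖^2 ≤ ∑ k, ‖Y k β‖^2)
    (hN : 0 < ∑ k, ‖Y k β‖^2)
    (u : Fin 3 → ℂ)
    (hu : ∀ i, u i = Y i β / ((Real.sqrt (∑ k, ‖Y k β‖^2) : ℝ) : ℂ)) :
    ‖(U_Lᴴ *ᵥ u) 0‖^2 ≤ (2 * (y 2)^2 - (y 1)^2) / ((y 2)^2 - 2 * (y 1)^2) * (y 0 / y 2)^2 ∧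
    ‖(U_Lᴴ *ᵥ u) 1‖^2 ≤ (2 * (y 2)^2 - (y 1)^2) / ((y 2)^2 - 2 * (y 1)^2) * (y 1 / y 2)^2 ∧
    1 - ‖(U_Lᴴ *ᵥ u) 2‖^2 ≤ (2 * (y 2)^2 - (y 1)^2) / ((y 2)^2 - 2 * (y 1)^2) * (y 1 / y 2)^2 :=
  normalized_longest_column_overlap_bounds_general Y U_L U_R y β hUL hUR hy0 h01 hgap hSVD hβ hN u
    hu
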